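/- Fix m ∈ ℕ. Define g_m : (−1,1) → ℝ by g_m(x) = (1 − x²)^(m + 5/2) (real power), and define Q_m : (−1,1) → ℝ by Q_m(x) = ((−1)^m / (2^m · m!)) · (1 − x²)^(−5/2) · (d^m g_m/dx^m)(x), i.e., Q_m is given by the Rodrigues formula for the Jacobi polynomial P_m^{(5/2,5/2)}. Then for every x ∈ (−1,1), (1 − x²)·Q_m''(x) − 7x·Q_m'(x) + m(m+6)·Q_m(x) = 0. -/

import Mathlib

/-!
With `s = 1 - x²` and `g = s^p`, `p = m + a`, one has `s g' = -2p x g`. Differentiating this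
identity `n + 1` times gives a three-term recurrence for the derivatives of `g`, and at `n = m`
it says that `u = g⁽ᵐ⁾` solves `s u'' + (2a - 2) x u' + (m + 1)(m + 2a) u = 0`. Conjugating by
`s^(-a)` turns this into the Jacobi equation `s Q'' - 2(a + 1) x Q' + m(m + 2a + 1) Q = 0`
for `Q = s^(-a) u`; the Rodrigues formula is the case `a = 5/2` up to a constant factor.
-/

open Real

/-- The Rodrigues formula for the Jacobi polynomial `P_m^{(5/2,5/2)}`:
`Q_m(x) = ((−1)^m / (2^m m!)) (1 − x²)^{−5/2} (d/dx)^m (1 − x²)^{m+5/2}`. -/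
noncomputable def rodriguesJacobi (m : ℕ) (x : ℝ) : ℝ :=
  ((-1 : ℝ) ^ m / (2 ^ m * (Nat.factorial m : ℝ))) * (1 - x ^ 2) ^ (-(5 : ℝ) / 2)
    * iteratedDeriv m (fun t : ℝ => (1 - t ^ 2) ^ ((m : ℝ) + 5 / 2)) x

open Set

open scoped ContDiff

theorem HasDerivAt.unique_of_eqOn {𝕜 F : Type*} [NontriviallyNormedField 𝕜]
    [NormedAddCommGroup F] [NormedSpace 𝕜 F] {f g : 𝕜 → F} {f' g' : F} {x : 𝕜}
    {s : Set 𝕜} (hs : IsOpen s)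
    (hfg : EqOn f g s) (hx : x ∈ s) (hf : HasDerivAt f f' x) (hg : HasDerivAt g g' x) :
    f' = g' :=
  (hf.congr_of_eventuallyEq (hfg.eventuallyEq_of_mem (hs.mem_nhds hx)).symm).unique hg

theorem ContDiffOn.hasDerivAt_iteratedDeriv {𝕜 F : Type*} [NontriviallyNormedField 𝕜]
    [NormedAddCommGroup F] [NormedSpace 𝕜 F] {f : 𝕜 → F} {s : Set 𝕜} (hs : IsOpen s)
    (hf : ContDiffOn 𝕜 ∞ f s) (n : ℕ) {x : 𝕜} (hx : x ∈ s) :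
    HasDerivAt (iteratedDeriv n f) (iteratedDeriv (n + 1) f x) x := by
  have hn : ContDiffOn 𝕜 ∞ (iteratedDeriv n f) s := by
    induction n with
    | zero => simpa using hf
    | succ n ih =>
      rw [iteratedDeriv_succ]
      exact ((contDiffOn_infty_iff_deriv_of_isOpen hs).1 ih).2
  rw [iteratedDeriv_succ]
  exact ((hn.differentiableOn (by simp) x hx).differentiableAt (hs.mem_nhds hx)).hasDerivAt

theorem rpow_eq_mul_rpow_sub_one {s : ℝ} (hs : s ≠ 0) (q : ℝ) : s ^ q = s * s ^ (q - 1) := by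
  rw [rpow_sub_one hs, mul_div_cancel₀ _ hs]

theorem one_sub_sq_pos {x : ℝ} (hx : x ∈ Ioo (-1 : ℝ) 1) : 0 < 1 - x ^ 2 := by
  obtain ⟨h₁, h₂⟩ := hx
  nlinarith

section OneSubSqRpow

variable (p : ℝ) {x : ℝ}

theorem hasDerivAt_one_sub_sq_rpow (hx : x ∈ Ioo (-1 : ℝ) 1) :
    HasDerivAt (fun t : ℝ => (1 - t ^ 2) ^ p) (-2 * p * x * (1 - x ^ 2) ^ (p - 1)) x := by
  have h := ((hasDerivAt_pow 2 x).const_sub 1).rpow_const (p := p)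
    (Or.inl (one_sub_sq_pos hx).ne')
  convert h using 1
  push_cast
  ring

theorem contDiffOn_one_sub_sq_rpow :
    ContDiffOn ℝ ∞ (fun t : ℝ => (1 - t ^ 2) ^ p) (Ioo (-1 : ℝ) 1) :=
  (contDiffOn_const.sub (contDiffOn_id.pow 2)).rpow_const_of_ne
    fun _ ht => (one_sub_sq_pos ht).ne'

theorem hasDerivAt_iteratedDeriv_one_sub_sq_rpow (n : ℕ) (hx : x ∈ Ioo (-1 : ℝ) 1) :
    HasDerivAt (iteratedDeriv n fun t : ℝ => (1 - t ^ 2) ^ p)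
      (iteratedDeriv (n + 1) (fun t : ℝ => (1 - t ^ 2) ^ p) x) x :=
  (contDiffOn_one_sub_sq_rpow p).hasDerivAt_iteratedDeriv isOpen_Ioo n hx

theorem one_sub_sq_mul_iteratedDeriv_one_rpow (hx : x ∈ Ioo (-1 : ℝ) 1) :
    (1 - x ^ 2) * iteratedDeriv 1 (fun t : ℝ => (1 - t ^ 2) ^ p) x
      = -2 * p * x * (1 - x ^ 2) ^ p := by
  rw [iteratedDeriv_one, (hasDerivAt_one_sub_sq_rpow p hx).deriv]
  rw [rpow_eq_mul_rpow_sub_one (one_sub_sq_pos hx).ne' p]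
  ring

theorem one_sub_sq_mul_iteratedDeriv_rpow_recurrence (n : ℕ) (hx : x ∈ Ioo (-1 : ℝ) 1) :
    (1 - x ^ 2) * iteratedDeriv (n + 2) (fun t : ℝ => (1 - t ^ 2) ^ p) x
      = 2 * (n + 1 - p) * x * iteratedDeriv (n + 1) (fun t : ℝ => (1 - t ^ 2) ^ p) x
        + (n + 1) * (n - 2 * p) * iteratedDeriv n (fun t : ℝ => (1 - t ^ 2) ^ p) x := by
  have hs (t : ℝ) : HasDerivAt (fun t : ℝ => 1 - t ^ 2) (-2 * t) t := by
    simpa using (hasDerivAt_pow 2 t).const_sub 1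
  have hu (k : ℕ) {t : ℝ} (ht : t ∈ Ioo (-1 : ℝ) 1) :=
    hasDerivAt_iteratedDeriv_one_sub_sq_rpow p k ht
  induction n generalizing x with
  | zero =>
    have h := HasDerivAt.unique_of_eqOn isOpen_Ioo
      (fun t ht => one_sub_sq_mul_iteratedDeriv_one_rpow p ht) hx ((hs x).mul (hu 1 hx))
      (((hasDerivAt_id' x).const_mul (-2 * p)).mul (hasDerivAt_one_sub_sq_rpow p hx))
    have hu₁ : iteratedDeriv 1 (fun t : ℝ => (1 - t ^ 2) ^ p) x
        = -2 * p * x * (1 - x ^ 2) ^ (p - 1) := by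
      rw [iteratedDeriv_one, (hasDerivAt_one_sub_sq_rpow p hx).deriv]
    rw [hu₁] at h ⊢
    rw [iteratedDeriv_zero]
    push_cast
    linear_combination h
  | succ n ih =>
    have h := HasDerivAt.unique_of_eqOn isOpen_Ioo (fun t ht => ih ht) hx
      ((hs x).mul (hu (n + 2) hx))
      ((((hasDerivAt_id' x).const_mul _).mul (hu (n + 1) hx)).add ((hu n hx).const_mul _))
    push_cast
    linear_combination h

end OneSubSqRpow

/-- The unnormalized Rodrigues formula for the Jacobi polynomial `P_m^{(a,a)}`. -/
noncomputable def symmetricRodrigues (a : ℝ) (m : ℕ) (x : ℝ) : ℝ :=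
  (1 - x ^ 2) ^ (-a) * iteratedDeriv m (fun t : ℝ => (1 - t ^ 2) ^ ((m : ℝ) + a)) x

section SymmetricRodrigues

variable (a : ℝ) (m : ℕ) {x : ℝ}

theorem hasDerivAt_symmetricRodrigues (hx : x ∈ Ioo (-1 : ℝ) 1) :
    HasDerivAt (symmetricRodrigues a m)
      (-2 * -a * x * (1 - x ^ 2) ^ (-a - 1)
          * iteratedDeriv m (fun t : ℝ => (1 - t ^ 2) ^ ((m : ℝ) + a)) x
        + (1 - x ^ 2) ^ (-a)
          * iteratedDeriv (m + 1) (fun t : ℝ => (1 - t ^ 2) ^ ((m : ℝ) + a)) x) x :=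
  (hasDerivAt_one_sub_sq_rpow (-a) hx).mul
    (hasDerivAt_iteratedDeriv_one_sub_sq_rpow _ m hx)

theorem symmetricRodrigues_jacobi_ode (hx : x ∈ Ioo (-1 : ℝ) 1) :
    (1 - x ^ 2) * deriv (deriv (symmetricRodrigues a m)) x
      - 2 * (a + 1) * x * deriv (symmetricRodrigues a m) x
      + m * (m + 2 * a + 1) * symmetricRodrigues a m x = 0 := by
  set u := fun k : ℕ => iteratedDeriv k (fun t : ℝ => (1 - t ^ 2) ^ ((m : ℝ) + a))
  have hu (k : ℕ) : HasDerivAt (u k) (u (k + 1) x) x :=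
    hasDerivAt_iteratedDeriv_one_sub_sq_rpow _ k hx
  have hQ' : EqOn (deriv (symmetricRodrigues a m))
      (fun t => -2 * -a * t * (1 - t ^ 2) ^ (-a - 1) * u m t + (1 - t ^ 2) ^ (-a) * u (m + 1) t)
      (Ioo (-1) 1) :=
    fun t ht => (hasDerivAt_symmetricRodrigues a m ht).deriv
  have hQ'' := ((((hasDerivAt_id' x).const_mul (-2 * -a)).mul
      (hasDerivAt_one_sub_sq_rpow (-a - 1) hx)).mul (hu m)).add
    ((hasDerivAt_one_sub_sq_rpow (-a) hx).mul (hu (m + 1)))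
  rw [(hQ''.congr_of_eventuallyEq (hQ'.eventuallyEq_of_mem (isOpen_Ioo.mem_nhds hx))).deriv,
    hQ' hx]
  have hrec := one_sub_sq_mul_iteratedDeriv_rpow_recurrence ((m : ℝ) + a) m hx
  have hs := (one_sub_sq_pos hx).ne'
  -- with `r = s^(-a-2)`, the claim is `s² r` times the recurrence at `n = m`
  simp only [symmetricRodrigues, Pi.mul_apply]
  rw [rpow_eq_mul_rpow_sub_one hs (-a), rpow_eq_mul_rpow_sub_one hs (-a - 1)]
  linear_combination (1 - x ^ 2) ^ 2 * (1 - x ^ 2) ^ (-a - 1 - 1) * hrec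

end SymmetricRodrigues

theorem rodriguesJacobi_eq_mul_symmetricRodrigues (m : ℕ) :
    rodriguesJacobi m
      = fun x => (-1 : ℝ) ^ m / (2 ^ m * m.factorial) * symmetricRodrigues (5 / 2) m x := by
  ext x
  rw [rodriguesJacobi, symmetricRodrigues, neg_div, mul_assoc]

/-- The function given by the Rodrigues formula for `P_m^{(5/2,5/2)}` satisfies the Jacobi
differential equation `(1 − x²) Q'' − 7x Q' + m(m+6) Q = 0` on `(−1,1)`. -/
theorem rodriguesJacobi_ode (m : ℕ) (x : ℝ) (hx : x ∈ Set.Ioo (-1 : ℝ) 1) :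
    (1 - x ^ 2) * deriv (deriv (rodriguesJacobi m)) x
      - 7 * x * deriv (rodriguesJacobi m) x
      + (m : ℝ) * ((m : ℝ) + 6) * rodriguesJacobi m x = 0 := by
  have h := symmetricRodrigues_jacobi_ode (5 / 2) m hx
  rw [rodriguesJacobi_eq_mul_symmetricRodrigues, deriv_const_mul_field', deriv_const_mul_field']
  linear_combination (-1 : ℝ) ^ m / (2 ^ m * m.factorial) * h
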